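/- Let N ∈ ℕ and let W⁺ be a probability weighting function. For 1 ≤ k ≤ N write h⁺_{j,k} = W⁺((k−j+1)/N) − W⁺((k−j)/N) for j = 1,…,k, and let J(k) be the transitional index for k gain outcomes. Then the sequence (J(k))_{k=1}^{N} is monotonically nondecreasing: J(k) ≤ J(k+1) for every 1 ≤ k ≤ N−1. -/

import Mathlib

open Finset

/-- An inverse S-shaped function on `[0,1]`: strictly increasing, continuously
differentiable, with a derivative strictly decreasing then strictly increasing. -/
def InverseSShaped (W : ℝ → ℝ) : Prop :=
  StrictMonoOn W (Set.Icc (0 : ℝ) 1) ∧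
  ContDiffOn ℝ 1 W (Set.Icc (0 : ℝ) 1) ∧
  ∃ x₀ ∈ Set.Icc (0 : ℝ) 1,
    StrictAntiOn (deriv W) (Set.Icc (0 : ℝ) x₀) ∧ StrictMonoOn (deriv W) (Set.Icc x₀ 1)

/-- A probability weighting function: inverse S-shaped with `W 0 = 0` and `W 1 = 1`. -/
def IsPWF (W : ℝ → ℝ) : Prop :=
  InverseSShaped W ∧ W 0 = 0 ∧ W 1 = 1

/-- Gain decision weights: `h⁺_j = W⁺((n−j+1)/N) − W⁺((n−j)/N)` for `j = 1,…,n`. -/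
noncomputable def gainW (W : ℝ → ℝ) (N n j : ℕ) : ℝ :=
  W (((n : ℝ) - j + 1) / N) - W (((n : ℝ) - j) / N)

/-- The transitional index
`J = min{ j ∈ {1,…,n} : j = n ∨ j·h⁺_{j+1} ≥ ∑_{j'≤j} h⁺_{j'} }`. -/
noncomputable def transIdx (W : ℝ → ℝ) (N n : ℕ) : ℕ :=
  sInf {j : ℕ | 1 ≤ j ∧ j ≤ n ∧
    (j = n ∨ ∑ j' ∈ Finset.Icc 1 j, gainW W N n j' ≤ (j : ℝ) * gainW W N n (j + 1))}

/-!
By the mean value theorem each decision weight is `W'(ξ)/N` for a point `ξ` of its interval, and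
since `W'` first decreases and then increases, no weight can be weakly larger than both of its
neighbours. A sequence without such interior local maxima is strictly quasiconvex: on every index
range it stays strictly below the larger of its endpoint values. If `J = J(k+1) < k`, so that
`∑_{j ≤ J} h_j ≤ J h_{J+1}` for the weights `h` of level `k+1`, quasiconvexity first gives
`h_{J+1} ≤ h_{J+2}`, and then `h_2 + ⋯ + h_{J+1} ≤ J h_{J+1}`. The level-`k` weights are the
level-`k+1` weights shifted by one index, so `J` satisfies the defining condition at level `k`.
-/

theorem lt_max_of_strictAntiOn_of_strictMonoOn {α β : Type*} [LinearOrder α] [LinearOrder β]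
    {f : α → β} {a b c : α} (hanti : StrictAntiOn f (Set.Icc a c))
    (hmono : StrictMonoOn f (Set.Icc c b)) {x y z : α} (hx : a ≤ x) (hxy : x < y) (hyz : y < z)
    (hz : z ≤ b) : f y < max (f x) (f z) := by
  rcases le_or_gt y c with hyc | hcy
  · exact lt_max_of_lt_left (hanti ⟨hx, hxy.le.trans hyc⟩ ⟨hx.trans hxy.le, hyc⟩ hxy)
  · exact lt_max_of_lt_right
      (hmono ⟨hcy.le, hyz.le.trans hz⟩ ⟨hcy.le.trans hyz.le, hz⟩ hyz)

theorem exists_mem_Ioo_sub_eq_deriv_mul {W : ℝ → ℝ} (hW : ContDiffOn ℝ 1 W (Set.Icc 0 1))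
    {x δ : ℝ} (hx : 0 ≤ x) (hδ : 0 < δ) (hxδ : x + δ ≤ 1) :
    ∃ ξ ∈ Set.Ioo x (x + δ), W (x + δ) - W x = deriv W ξ * δ := by
  have hsub : Set.Icc x (x + δ) ⊆ Set.Icc 0 1 := Set.Icc_subset_Icc hx hxδ
  obtain ⟨ξ, hξ, hslope⟩ := exists_deriv_eq_slope W (lt_add_of_pos_right x hδ)
    (hW.continuousOn.mono hsub)
    ((hW.differentiableOn one_ne_zero).mono (Set.Ioo_subset_Icc_self.trans hsub))
  refine ⟨ξ, hξ, ?_⟩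
  rw [hslope, add_sub_cancel_left, div_mul_cancel₀ _ hδ.ne']

theorem InverseSShaped.sub_lt_max_sub {W : ℝ → ℝ} (hW : InverseSShaped W) {x₀ x₁ x₂ x₃ δ : ℝ}
    (h₁ : x₁ = x₀ + δ) (h₂ : x₂ = x₁ + δ) (h₃ : x₃ = x₂ + δ) (hx₀ : 0 ≤ x₀) (hδ : 0 < δ)
    (hx₃ : x₃ ≤ 1) : W x₂ - W x₁ < max (W x₁ - W x₀) (W x₃ - W x₂) := by
  obtain ⟨-, hcd, c, -, hanti, hmono⟩ := hW
  subst h₁ h₂ h₃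
  obtain ⟨ξ₀, hξ₀, e₀⟩ := exists_mem_Ioo_sub_eq_deriv_mul hcd hx₀ hδ (by linarith)
  obtain ⟨ξ₁, hξ₁, e₁⟩ := exists_mem_Ioo_sub_eq_deriv_mul hcd (x := x₀ + δ) (by linarith) hδ
    (by linarith)
  obtain ⟨ξ₂, hξ₂, e₂⟩ := exists_mem_Ioo_sub_eq_deriv_mul hcd (by linarith) hδ hx₃
  rw [e₀, e₁, e₂, ← max_mul_of_nonneg _ _ hδ.le]
  refine mul_lt_mul_of_pos_right ?_ hδ
  exact lt_max_of_strictAntiOn_of_strictMonoOn hanti hmono (by linarith [hξ₀.1])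
    (by linarith [hξ₀.2, hξ₁.1]) (by linarith [hξ₁.2, hξ₂.1]) (by linarith [hξ₂.2])

theorem gainW_succ_lt_max {W : ℝ → ℝ} (hW : InverseSShaped W) {N n m : ℕ} (hm : 1 ≤ m)
    (hmn : m + 2 ≤ n) (hnN : n ≤ N) :
    gainW W N n (m + 1) < max (gainW W N n m) (gainW W N n (m + 2)) := by
  have hN : (0 : ℝ) < N := by exact_mod_cast (show 0 < N by omega)
  have hm' : (1 : ℝ) ≤ m := by exact_mod_cast hm
  have hmn' : (m : ℝ) + 2 ≤ n := by exact_mod_cast hmn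
  have hnN' : (n : ℝ) ≤ N := by exact_mod_cast hnN
  have key := hW.sub_lt_max_sub (x₀ := (n - (m + 2)) / N) (x₁ := (n - (m + 1)) / N)
    (x₂ := (n - m) / N) (x₃ := (n - m + 1) / N) (δ := 1 / N) (by ring) (by ring) (by ring)
    (div_nonneg (by linarith) hN.le) (by positivity)
    ((div_le_one hN).2 (by linarith))
  rw [max_comm] at key
  simp only [gainW]
  push_cast
  rwa [show (n : ℝ) - (m + 1) + 1 = n - m by ring, show (n : ℝ) - (m + 2) + 1 = n - (m + 1) by ring]

theorem gainW_eq_gainW_succ_succ (W : ℝ → ℝ) (N n j : ℕ) :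
    gainW W N n j = gainW W N (n + 1) (j + 1) := by
  simp only [gainW]
  push_cast
  ring_nf

section LocalMax

variable {β : Type*} [LinearOrder β] {h : ℕ → β} {a b : ℕ}

theorem strictMonoOn_Icc_of_lt_succ_of_lt_max (hloc : ∀ m, a ≤ m → m + 2 ≤ b →
    h (m + 1) < max (h m) (h (m + 2))) {j : ℕ} (hj : a ≤ j) (hup : h j < h (j + 1)) :
    StrictMonoOn h (Set.Icc j b) := by
  have hstep : ∀ m, j ≤ m → m + 1 ≤ b → h m < h (m + 1) := by
    intro m hjm
    induction m, hjm using Nat.le_induction with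
    | base => exact fun _ => hup
    | succ m hjm ih =>
      intro hmb
      exact (lt_max_iff.mp (hloc m (hj.trans hjm) hmb)).resolve_left
        (not_lt.mpr (ih (by omega)).le)
  exact strictMonoOn_of_lt_add_one Set.ordConnected_Icc
    fun m _ hm hm1 => hstep m hm.1 hm1.2

theorem strictAntiOn_Icc_of_succ_le_of_lt_max (hloc : ∀ m, a ≤ m → m + 2 ≤ b →
    h (m + 1) < max (h m) (h (m + 2))) {j : ℕ} (hjb : j + 1 ≤ b) (hdown : h (j + 1) ≤ h j) :
    StrictAntiOn h (Set.Icc a j) := by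
  have hstep : ∀ d m, a ≤ m → m + 1 + d = j → h (m + 1) < h m := by
    intro d
    induction d with
    | zero =>
      rintro m ham rfl
      exact (lt_max_iff.mp (hloc m ham hjb)).resolve_right (not_lt.mpr hdown)
    | succ d ih =>
      intro m ham hmj
      exact (lt_max_iff.mp (hloc m ham (by omega))).resolve_right
        (not_lt.mpr (ih (m + 1) (by omega) (by omega)).le)
  exact strictAntiOn_of_add_one_lt Set.ordConnected_Icc
    fun m _ hm hm1 => hstep (j - (m + 1)) m hm.1 (by grind)

theorem lt_max_of_forall_lt_max (hloc : ∀ m, a ≤ m → m + 2 ≤ b →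
    h (m + 1) < max (h m) (h (m + 2))) {i j l : ℕ} (hi : a ≤ i) (hij : i < j) (hjl : j < l)
    (hl : l ≤ b) : h j < max (h i) (h l) := by
  rcases lt_or_ge (h j) (h (j + 1)) with hup | hdown
  · exact lt_max_of_lt_right (strictMonoOn_Icc_of_lt_succ_of_lt_max hloc (by omega) hup
      ⟨le_rfl, by omega⟩ ⟨by omega, hl⟩ hjl)
  · exact lt_max_of_lt_left (strictAntiOn_Icc_of_succ_le_of_lt_max hloc (by omega) hdown
      ⟨hi, hij.le⟩ ⟨by omega, le_rfl⟩ hij)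

end LocalMax

section TransitionalSums

variable {h : ℕ → ℝ} {b J : ℕ}

theorem le_of_sum_Icc_le_mul (hloc : ∀ m, 1 ≤ m → m + 2 ≤ b →
    h (m + 1) < max (h m) (h (m + 2))) (hJ : 1 ≤ J) (hJb : J + 2 ≤ b)
    (hsum : ∑ i ∈ Icc 1 J, h i ≤ J * h (J + 1)) : h (J + 1) ≤ h (J + 2) := by
  by_contra! hlt
  have hlt_each : ∀ i ∈ Icc 1 J, h (J + 1) < h i := fun i hi =>
    (lt_max_iff.mp (lt_max_of_forall_lt_max hloc (mem_Icc.1 hi).1 (by grind)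
      (lt_add_one _) hJb)).resolve_right hlt.not_gt
  have := sum_lt_sum_of_nonempty ⟨1, mem_Icc.2 ⟨le_rfl, hJ⟩⟩ hlt_each
  simp only [sum_const, Nat.card_Icc, add_tsub_cancel_right, nsmul_eq_mul] at this
  linarith

theorem sum_Icc_succ_le_mul (hloc : ∀ m, 1 ≤ m → m + 2 ≤ b →
    h (m + 1) < max (h m) (h (m + 2))) (hJ : 1 ≤ J) (hJb : J + 1 ≤ b)
    (hsum : ∑ i ∈ Icc 1 J, h i ≤ J * h (J + 1)) : ∑ i ∈ Icc 1 J, h (i + 1) ≤ J * h (J + 1) := by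
  by_cases hfirst : h (J + 1) ≤ h 1
  · have htele : ∑ i ∈ Icc 1 J, h (i + 1) = ∑ i ∈ Icc 1 J, h i + (h (J + 1) - h 1) := by
      rw [← sum_Icc_sub hJ, ← sum_add_distrib]
      simp
    linarith
  · push Not at hfirst
    calc ∑ i ∈ Icc 1 J, h (i + 1) ≤ ∑ _i ∈ Icc 1 J, h (J + 1) := by
          refine sum_le_sum fun i hi => ?_
          rcases (mem_Icc.1 hi).2.lt_or_eq with hiJ | rfl
          · exact (lt_max_of_forall_lt_max hloc le_rfl (by grind) (by omega)
              hJb).le.trans (max_eq_right hfirst.le).le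
          · exact le_rfl
      _ = J * h (J + 1) := by simp

end TransitionalSums

theorem transIdx_le {W : ℝ → ℝ} {N n j : ℕ} (hj : 1 ≤ j) (hjn : j ≤ n)
    (hcond : j = n ∨ ∑ j' ∈ Icc 1 j, gainW W N n j' ≤ (j : ℝ) * gainW W N n (j + 1)) :
    transIdx W N n ≤ j :=
  Nat.sInf_le ⟨hj, hjn, hcond⟩

theorem transIdx_spec (W : ℝ → ℝ) (N : ℕ) {n : ℕ} (hn : 1 ≤ n) :
    1 ≤ transIdx W N n ∧ transIdx W N n ≤ n ∧ (transIdx W N n = n ∨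
      ∑ j' ∈ Icc 1 (transIdx W N n), gainW W N n j' ≤
        (transIdx W N n : ℝ) * gainW W N n (transIdx W N n + 1)) :=
  (Nat.sInf_mem ⟨n, hn, le_rfl, Or.inl rfl⟩ : transIdx W N n ∈ Set.ofPred _)

/-- the transitional indices `(J(k))_{k=1}^{N}` form a monotonically
nondecreasing sequence. -/
theorem transIdx_monotone (W : ℝ → ℝ) (N : ℕ) (hW : IsPWF W) :
    ∀ k : ℕ, 1 ≤ k → k ≤ N - 1 → transIdx W N k ≤ transIdx W N (k + 1) := by
  intro k hk hkN
  obtain ⟨hJ1, -, hJ⟩ := transIdx_spec W N (n := k + 1) (by omega)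
  set J := transIdx W N (k + 1)
  rcases le_or_gt k J with hkJ | hJk
  · exact (transIdx_le hk le_rfl (Or.inl rfl)).trans hkJ
  have hsum := hJ.resolve_left (by omega)
  have hloc : ∀ m, 1 ≤ m → m + 2 ≤ k + 1 → gainW W N (k + 1) (m + 1) <
      max (gainW W N (k + 1) m) (gainW W N (k + 1) (m + 2)) :=
    fun m hm hmk => gainW_succ_lt_max hW.1 hm hmk (by omega)
  refine transIdx_le hJ1 hJk.le (Or.inr ?_)
  simp only [gainW_eq_gainW_succ_succ W N k]
  calc ∑ j' ∈ Icc 1 J, gainW W N (k + 1) (j' + 1) ≤ J * gainW W N (k + 1) (J + 1) :=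
        sum_Icc_succ_le_mul hloc hJ1 (by omega) hsum
    _ ≤ J * gainW W N (k + 1) (J + 1 + 1) :=
        mul_le_mul_of_nonneg_left (le_of_sum_Icc_le_mul hloc hJ1 (by omega) hsum) J.cast_nonneg
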